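/- arXiv:2509.23817 — 9 statements merged into one kernel-verified Lean document; each statement's English description precedes it below -/
import Mathlib

section
/- Let H be a real Hilbert space, C ⊆ H a nonempty closed convex set, and F : H × H → ℝ a bifunction on C satisfying (C1), (C2) and (C5). If x* ∈ C satisfies F(y, x*) ≤ 0 for all y ∈ C, then x* also satisfies F(x*, y) ≥ 0 for all y ∈ C. -/
open RealInnerProductSpace

/-- Minty's lemma, second direction. If `F` satisfies (C1), (C2), (C5)
and `x*` solves the dual problem `F(y, x*) ≤ 0` for all `y ∈ C`, then `x*` solves the
equilibrium problem `F(x*, y) ≥ 0` for all `y ∈ C`. Upper hemicontinuity (C5) is stated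
with an `EReal`-valued `limsup` as `t ↓ 0`. -/
theorem minty_backward
    {H : Type*} [NormedAddCommGroup H] [InnerProductSpace ℝ H] [CompleteSpace H]
    (C : Set H) (hCne : C.Nonempty) (hCcl : IsClosed C) (hCcv : Convex ℝ C)
    (F : H → H → ℝ)
    (hC1 : ∀ x ∈ C, F x x = 0)
    (hC2 : ∀ x ∈ C, ConvexOn ℝ C (F x))
    (hC5 : ∀ x ∈ C, ∀ y ∈ C, ∀ z ∈ C,
      Filter.limsup (fun t : ℝ => ((F (t • z + (1 - t) • x) y : ℝ) : EReal))
        (nhdsWithin 0 (Set.Ioi 0)) ≤ ((F x y : ℝ) : EReal))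
    (xs : H) (hxs : xs ∈ C)
    (hDKFI : ∀ y ∈ C, F y xs ≤ 0) :
    ∀ y ∈ C, 0 ≤ F xs y := by
  intro y hy
  -- For t ∈ (0,1), the point x_t := t•y + (1-t)•xs lies in C and F x_t y ≥ 0.
  have key : ∀ t : ℝ, t ∈ Set.Ioo (0:ℝ) 1 → 0 ≤ F (t • y + (1 - t) • xs) y := by
    intro t ht
    set xt := t • y + (1 - t) • xs with hxt
    have hxtC : xt ∈ C := hCcv hy hxs (le_of_lt ht.1) (by linarith [ht.2]) (by ring)
    have hconv := (hC2 xt hxtC).2 hy hxs (le_of_lt ht.1)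
      (by linarith [ht.2] : (0:ℝ) ≤ 1 - t) (by ring)
    rw [← hxt, hC1 xt hxtC] at hconv
    have h2 : F xt xs ≤ 0 := hDKFI xt hxtC
    simp only [smul_eq_mul] at hconv
    nlinarith [ht.1, ht.2]
  have hne : (nhdsWithin (0:ℝ) (Set.Ioi 0)).NeBot := by infer_instance
  have hev : ∀ᶠ t in nhdsWithin (0:ℝ) (Set.Ioi 0),
      (0 : EReal) ≤ ((F (t • y + (1 - t) • xs) y : ℝ) : EReal) := by
    filter_upwards [Ioo_mem_nhdsGT_of_mem (by norm_num : (0:ℝ) ∈ Set.Ico (0:ℝ) 1)] with t ht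
    exact_mod_cast key t ht
  have hle : (0 : EReal) ≤
      Filter.limsup (fun t : ℝ => ((F (t • y + (1 - t) • xs) y : ℝ) : EReal))
        (nhdsWithin 0 (Set.Ioi 0)) :=
    Filter.le_limsup_of_frequently_le hev.frequently
  have := le_trans hle (hC5 xs hxs y hy y hy)
  exact_mod_cast this
end

section
/- Let H be a real Hilbert space, C ⊆ H a nonempty closed convex set, and F : H × H → ℝ a bifunction on C satisfying (C1)–(C4). Let r > 0, let x₁, x₂ ∈ H, and let z₁, z₂ ∈ C be resolvent points of F at x₁ and x₂ respectively, each with parameter r. Then ‖z₁ − z₂‖ ≤ ‖x₁ − x₂‖. -/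
open RealInnerProductSpace

/-- nonexpansiveness of the resolvent. If `F` satisfies (C1)-(C4), `r > 0`,
and `z₁, z₂ ∈ C` are resolvent points of `F` at `x₁, x₂` with parameter `r`, then
`‖z₁ - z₂‖ ≤ ‖x₁ - x₂‖`. -/
theorem resolvent_nonexpansive
    {H : Type*} [NormedAddCommGroup H] [InnerProductSpace ℝ H] [CompleteSpace H]
    (C : Set H) (hCne : C.Nonempty) (hCcl : IsClosed C) (hCcv : Convex ℝ C)
    (F : H → H → ℝ)
    (hC1 : ∀ x ∈ C, F x x = 0)
    (hC2 : ∀ x ∈ C, ConvexOn ℝ C (F x))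
    (hC3 : ∀ x ∈ C, LowerSemicontinuousOn (F x) C)
    (hC4 : ∀ x ∈ C, ∀ y ∈ C, F x y + F y x ≤ 0)
    (r : ℝ) (hr : 0 < r) (x₁ x₂ z₁ z₂ : H)
    (hz₁ : z₁ ∈ C) (hz₂ : z₂ ∈ C)
    (hres₁ : ∀ y ∈ C, 0 ≤ r * F z₁ y + ⟪y - z₁, z₁ - x₁⟫)
    (hres₂ : ∀ y ∈ C, 0 ≤ r * F z₂ y + ⟪y - z₂, z₂ - x₂⟫) :
    ‖z₁ - z₂‖ ≤ ‖x₁ - x₂‖ := by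
  have h1 := hres₁ z₂ hz₂
  have h2 := hres₂ z₁ hz₁
  have hmono := hC4 z₁ hz₁ z₂ hz₂
  have key : 0 ≤ ⟪z₂ - z₁, z₁ - x₁⟫ + ⟪z₁ - z₂, z₂ - x₂⟫ := by
    nlinarith [mul_nonneg hr.le (neg_nonneg.2 hmono)]
  have key2 : ⟪z₁ - z₂, z₁ - z₂⟫ ≤ ⟪z₁ - z₂, x₁ - x₂⟫ := by
    simp only [inner_sub_left, inner_sub_right] at key ⊢
    have s1 : ⟪z₁, z₂⟫ = ⟪z₂, z₁⟫ := real_inner_comm _ _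
    have s2 : ⟪z₁, x₁⟫ = ⟪x₁, z₁⟫ := real_inner_comm _ _
    have s3 : ⟪z₂, x₂⟫ = ⟪x₂, z₂⟫ := real_inner_comm _ _
    linarith
  have h3 : ‖z₁ - z₂‖ ^ 2 ≤ ‖z₁ - z₂‖ * ‖x₁ - x₂‖ := by
    calc ‖z₁ - z₂‖ ^ 2 = ⟪z₁ - z₂, z₁ - z₂⟫ := (real_inner_self_eq_norm_sq _).symm
      _ ≤ ⟪z₁ - z₂, x₁ - x₂⟫ := key2
      _ ≤ ‖z₁ - z₂‖ * ‖x₁ - x₂‖ := real_inner_le_norm _ _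
  rcases eq_or_lt_of_le (norm_nonneg (z₁ - z₂)) with h | h
  · rw [← h]; exact norm_nonneg _
  · nlinarith
end

section
/- Let H be a real Hilbert space, C ⊆ H a nonempty closed convex set, and F : H × H → ℝ a bifunction on C satisfying (C1)–(C4). Let r > 0, let x₁, x₂ ∈ H, and let z₁, z₂ ∈ C be resolvent points of F at x₁ and x₂ respectively, each with parameter r. Define the Yosida approximations A₁ = (x₁ − z₁)/r and A₂ = (x₂ − z₂)/r. Then r‖A₁ − A₂‖² ≤ ⟨A₁ − A₂, x₁ − x₂⟩. -/
open RealInnerProductSpace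

/-- cocoercivity of the Yosida approximation. If `F` satisfies (C1)-(C4),
`r > 0`, `z₁, z₂ ∈ C` are resolvent points of `F` at `x₁, x₂` with parameter `r`, and
`A₁ = (x₁ - z₁)/r`, `A₂ = (x₂ - z₂)/r`, then `r ‖A₁ - A₂‖² ≤ ⟪A₁ - A₂, x₁ - x₂⟫`. -/
theorem yosida_cocoercive
    {H : Type*} [NormedAddCommGroup H] [InnerProductSpace ℝ H] [CompleteSpace H]
    (C : Set H) (hCne : C.Nonempty) (hCcl : IsClosed C) (hCcv : Convex ℝ C)
    (F : H → H → ℝ)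
    (hC1 : ∀ x ∈ C, F x x = 0)
    (hC2 : ∀ x ∈ C, ConvexOn ℝ C (F x))
    (hC3 : ∀ x ∈ C, LowerSemicontinuousOn (F x) C)
    (hC4 : ∀ x ∈ C, ∀ y ∈ C, F x y + F y x ≤ 0)
    (r : ℝ) (hr : 0 < r) (x₁ x₂ z₁ z₂ : H)
    (hz₁ : z₁ ∈ C) (hz₂ : z₂ ∈ C)
    (hres₁ : ∀ y ∈ C, 0 ≤ r * F z₁ y + ⟪y - z₁, z₁ - x₁⟫)
    (hres₂ : ∀ y ∈ C, 0 ≤ r * F z₂ y + ⟪y - z₂, z₂ - x₂⟫)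
    (A₁ A₂ : H) (hA₁ : A₁ = r⁻¹ • (x₁ - z₁)) (hA₂ : A₂ = r⁻¹ • (x₂ - z₂)) :
    r * ‖A₁ - A₂‖ ^ 2 ≤ ⟪A₁ - A₂, x₁ - x₂⟫ := by
  have h1 := hres₁ z₂ hz₂
  have h2 := hres₂ z₁ hz₁
  have hmono := hC4 z₁ hz₁ z₂ hz₂
  have hkey : 0 ≤ ⟪z₁ - z₂, (x₁ - z₁) - (x₂ - z₂)⟫ := by
    have hsum : 0 ≤ r * (F z₁ z₂ + F z₂ z₁) + (⟪z₂ - z₁, z₁ - x₁⟫ + ⟪z₁ - z₂, z₂ - x₂⟫) := by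
      nlinarith [h1, h2]
    have hrF : r * (F z₁ z₂ + F z₂ z₁) ≤ 0 :=
      mul_nonpos_of_nonneg_of_nonpos hr.le hmono
    have : 0 ≤ ⟪z₂ - z₁, z₁ - x₁⟫ + ⟪z₁ - z₂, z₂ - x₂⟫ := by linarith
    have e : ⟪z₂ - z₁, z₁ - x₁⟫ + ⟪z₁ - z₂, z₂ - x₂⟫ = ⟪z₁ - z₂, (x₁ - z₁) - (x₂ - z₂)⟫ := by
      simp only [inner_sub_left, inner_sub_right]
      ring
    linarith [e ▸ this]
  have hx : x₁ - x₂ = r • (A₁ - A₂) + (z₁ - z₂) := by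
    rw [hA₁, hA₂, smul_sub, smul_smul, smul_smul, mul_inv_cancel₀ hr.ne', one_smul, one_smul]
    abel
  have hzi : ⟪A₁ - A₂, z₁ - z₂⟫ = r⁻¹ * ⟪z₁ - z₂, (x₁ - z₁) - (x₂ - z₂)⟫ := by
    rw [hA₁, hA₂, ← smul_sub, real_inner_smul_left, real_inner_comm]
  rw [hx, inner_add_right, real_inner_smul_right, real_inner_self_eq_norm_sq, hzi]
  have : 0 ≤ r⁻¹ * ⟪z₁ - z₂, (x₁ - z₁) - (x₂ - z₂)⟫ :=
    mul_nonneg (inv_nonneg.2 hr.le) hkey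
  nlinarith [this]
end

section
/- Let H be a real Hilbert space, C ⊆ H a nonempty closed convex set, and F : H × H → ℝ a bifunction on C satisfying (C1)–(C4). Let x ∈ C, r > 0, and let z ∈ C be a resolvent point of F at x with parameter r. Then for every u ∈ H satisfying F(x,y) + ⟨u, x − y⟩ ≥ 0 for all y ∈ C, one has (1/r)‖x − z‖ ≤ ‖u‖. -/
open RealInnerProductSpace

/-- the Yosida approximation is bounded by any selection of `A^F`.
If `F` satisfies (C1)-(C4), `x ∈ C`, `r > 0`, `z ∈ C` is a resolvent point of `F` at `x`
with parameter `r`, and `u` satisfies `F(x,y) + ⟪u, x - y⟫ ≥ 0` for all `y ∈ C`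
(i.e. `u ∈ A^F(x)`), then `(1/r) ‖x - z‖ ≤ ‖u‖`. -/
theorem yosida_le_selection
    {H : Type*} [NormedAddCommGroup H] [InnerProductSpace ℝ H] [CompleteSpace H]
    (C : Set H) (hCne : C.Nonempty) (hCcl : IsClosed C) (hCcv : Convex ℝ C)
    (F : H → H → ℝ)
    (hC1 : ∀ x ∈ C, F x x = 0)
    (hC2 : ∀ x ∈ C, ConvexOn ℝ C (F x))
    (hC3 : ∀ x ∈ C, LowerSemicontinuousOn (F x) C)
    (hC4 : ∀ x ∈ C, ∀ y ∈ C, F x y + F y x ≤ 0)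
    (x : H) (hx : x ∈ C) (r : ℝ) (hr : 0 < r) (z : H) (hz : z ∈ C)
    (hres : ∀ y ∈ C, 0 ≤ r * F z y + ⟪y - z, z - x⟫)
    (u : H) (hu : ∀ y ∈ C, 0 ≤ F x y + ⟪u, x - y⟫) :
    (1 / r) * ‖x - z‖ ≤ ‖u‖ := by
  have h1 := hres x hx
  have h2 := hu z hz
  have h3 := hC4 x hx z hz
  have hinner : ⟪x - z, z - x⟫ = -‖x - z‖^2 := by
    rw [show z - x = -(x - z) by abel, inner_neg_right, real_inner_self_eq_norm_sq]
  have key : ‖x - z‖^2 ≤ r * ⟪u, x - z⟫ := by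
    have hFzx : F z x ≤ ⟪u, x - z⟫ := by linarith
    nlinarith [hr.le]
  have hcs : ⟪u, x - z⟫ ≤ ‖u‖ * ‖x - z‖ := real_inner_le_norm u (x - z)
  have hmul : ‖x - z‖^2 ≤ r * (‖u‖ * ‖x - z‖) := by nlinarith
  rcases eq_or_lt_of_le (norm_nonneg (x - z)) with h0 | h0
  · rw [← h0, mul_zero]; exact norm_nonneg u
  · rw [div_mul_eq_mul_div, div_le_iff₀ hr]
    nlinarith
end

section
/- Let H be a real Hilbert space. Let {α_k} ⊂ (0,1) satisfy 0 < liminf_{k→∞} α_k ≤ limsup_{k→∞} α_k < 1. Let {x_k} and {v_k} be bounded sequences in H such that x_{k+1} = α_k x_k + (1 − α_k) v_k for all k, and limsup_{k→∞} (‖v_{k+1} − v_k‖ − ‖x_{k+1} − x_k‖) ≤ 0. Then ‖v_k − x_k‖ → 0 as k → ∞. -/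
open Filter

private lemma suzuki_tele {H : Type*} [NormedAddCommGroup H] (v : ℕ → H) (j : ℕ) :
    ∀ N, j ≤ N → ‖v N - v j‖ ≤ ∑ i ∈ Finset.Ico j N, ‖v (i + 1) - v i‖ := by
  intro N hN
  induction N, hN using Nat.le_induction with
  | base => simp
  | succ n hn ih =>
    rw [Finset.sum_Ico_succ_top hn]
    calc ‖v (n + 1) - v j‖ ≤ ‖v (n + 1) - v n‖ + ‖v n - v j‖ := by
          simpa using norm_add_le (v (n + 1) - v n) (v n - v j)
      _ ≤ ‖v (n + 1) - v n‖ + ∑ i ∈ Finset.Ico j n, ‖v (i + 1) - v i‖ := by linarith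
      _ = ∑ i ∈ Finset.Ico j n, ‖v (i + 1) - v i‖ + ‖v (n + 1) - v n‖ := by ring

private lemma suzuki_key {H : Type*} [NormedAddCommGroup H] [NormedSpace ℝ H]
    (α : ℕ → ℝ) (x v : ℕ → H) (c ε αlo : ℝ) (K m N : ℕ)
    (hα : ∀ k, α k ∈ Set.Ioo (0 : ℝ) 1)
    (hrec : ∀ k, x (k + 1) = α k • x k + (1 - α k) • v k)
    (hαlo : 0 < αlo) (hαlo1 : αlo ≤ 1)
    (hαm : ∀ i, m ≤ i → αlo ≤ α i)
    (hsle : ∀ i, m ≤ i → ‖v i - x i‖ ≤ c + ε)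
    (hvx : ∀ i, m ≤ i → ‖v (i + 1) - v i‖ ≤ ‖x (i + 1) - x i‖ + ε)
    (hε : 0 ≤ ε) (hc : 0 ≤ c)
    (hbase : c - ε ≤ ‖v N - x N‖)
    (hmN : m + K ≤ N) :
    ∀ k, k ≤ K → c * (1 + ∑ i ∈ Finset.Ico (N - k) N, (1 - α i))
      - ε * ((2 * K + 3) * (αlo⁻¹) ^ k * (k + 1)) ≤ ‖v N - x (N - k)‖ := by
  have hxd : ∀ i, ‖x (i + 1) - x i‖ = (1 - α i) * ‖v i - x i‖ := by
    intro i
    have h1 : x (i + 1) - x i = (1 - α i) • (v i - x i) := by rw [hrec i]; module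
    rw [h1, norm_smul, Real.norm_eq_abs, abs_of_nonneg (by linarith [(hα i).2])]
  have hβ1 : (1 : ℝ) ≤ αlo⁻¹ := by
    rw [← one_div]
    rw [le_div_iff₀ hαlo]
    linarith
  intro k
  induction k with
  | zero =>
    intro _
    simp only [Nat.sub_zero, Finset.Ico_self, Finset.sum_empty, pow_zero, Nat.cast_zero]
    have hK0 : (0:ℝ) ≤ (K:ℝ) := Nat.cast_nonneg K
    nlinarith [hbase]
  | succ k ih =>
    intro hk
    have ihk := ih (Nat.le_of_succ_le hk)
    set β := αlo⁻¹ with hβdef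
    have hβk : (1 : ℝ) ≤ β ^ k := one_le_pow₀ hβ1
    have hkN : k + 1 ≤ N := le_trans (le_trans hk (Nat.le_add_left K m)) hmN
    set j := N - (k + 1) with hjdef
    have hjm : m ≤ j := by omega
    have hjN : j < N := by omega
    have hj1 : N - k = j + 1 := by omega
    rw [hj1] at ihk
    have hA0 : 0 < α j := (hα j).1
    have hA1 : α j < 1 := (hα j).2
    have hAlo : αlo ≤ α j := hαm j hjm
    set S' : ℝ := ∑ i ∈ Finset.Ico j N, (1 - α i) with hS'def
    set Sk : ℝ := ∑ i ∈ Finset.Ico (j + 1) N, (1 - α i) with hSkdef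
    have hSsplit : S' = (1 - α j) + Sk := Finset.sum_eq_sum_Ico_succ_bot hjN _
    have hS'le : S' ≤ (k : ℝ) + 1 := by
      have hb : ∀ i ∈ Finset.Ico j N, (1 - α i) ≤ 1 := fun i _ => by linarith [(hα i).1]
      calc S' ≤ (Finset.Ico j N).card • (1 : ℝ) := Finset.sum_le_card_nsmul _ _ _ hb
        _ = ((N - j : ℕ) : ℝ) := by rw [Nat.card_Ico]; simp
        _ = (k : ℝ) + 1 := by rw [show N - j = k + 1 by omega]; push_cast; ring
    have hS'nn : 0 ≤ S' := Finset.sum_nonneg fun i _ => by linarith [(hα i).2]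
    -- bound on D = ‖v N - v j‖
    have hD : ‖v N - v j‖ ≤ (c + ε) * S' + ((k : ℝ) + 1) * ε := by
      calc ‖v N - v j‖ ≤ ∑ i ∈ Finset.Ico j N, ‖v (i + 1) - v i‖ :=
            suzuki_tele v j N hjN.le
        _ ≤ ∑ i ∈ Finset.Ico j N, ((1 - α i) * (c + ε) + ε) := by
            apply Finset.sum_le_sum
            intro i hi
            have him : m ≤ i := le_trans hjm (Finset.mem_Ico.1 hi).1
            have h1 := hvx i him
            rw [hxd i] at h1
            have h2 : (1 - α i) * ‖v i - x i‖ ≤ (1 - α i) * (c + ε) :=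
              mul_le_mul_of_nonneg_left (hsle i him) (by linarith [(hα i).2])
            linarith
        _ = (c + ε) * S' + ((k : ℝ) + 1) * ε := by
            rw [Finset.sum_add_distrib, Finset.sum_const, ← Finset.sum_mul, Nat.card_Ico,
              show N - j = k + 1 by omega]
            push_cast; ring
    -- the one-step recursion inequality
    have hid : v N - x (j + 1) = α j • (v N - x j) + (1 - α j) • (v N - v j) := by
      rw [hrec j]; module
    have hGrec : ‖v N - x (j + 1)‖ ≤ α j * ‖v N - x j‖ + (1 - α j) * ‖v N - v j‖ := by
      rw [hid]
      calc ‖α j • (v N - x j) + (1 - α j) • (v N - v j)‖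
          ≤ ‖α j • (v N - x j)‖ + ‖(1 - α j) • (v N - v j)‖ := norm_add_le _ _
        _ = α j * ‖v N - x j‖ + (1 - α j) * ‖v N - v j‖ := by
            rw [norm_smul, norm_smul, Real.norm_eq_abs, Real.norm_eq_abs,
              abs_of_pos hA0, abs_of_nonneg (by linarith)]
    -- the coefficient inequality
    have hCk : ((2 * (K:ℝ) + 3) * β ^ k * ((k:ℝ) + 1)) + (1 - α j) * S'
        + (1 - α j) * ((k:ℝ) + 1)
        ≤ α j * ((2 * (K:ℝ) + 3) * β ^ (k + 1) * (((k:ℝ) + 1) + 1)) := by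
      have hΓ : (0:ℝ) ≤ 2 * (K:ℝ) + 3 := by positivity
      have hkK : (k : ℝ) + 1 ≤ (K : ℝ) := by exact_mod_cast hk
      have h1 : (1 - α j) * S' ≤ (k : ℝ) + 1 := by nlinarith [mul_nonneg hA0.le hS'nn]
      have h2 : (1 - α j) * ((k:ℝ) + 1) ≤ (k : ℝ) + 1 := by
        nlinarith [mul_nonneg hA0.le (by positivity : (0:ℝ) ≤ (k:ℝ) + 1)]
      have h3 : β ^ k ≤ α j * β ^ (k + 1) := by
        have hαβ : αlo * β = 1 := by rw [hβdef]; field_simp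
        calc β ^ k = (αlo * β) * β ^ k := by rw [hαβ]; ring
          _ ≤ (α j * β) * β ^ k := by
              have : αlo * β ≤ α j * β := by
                apply mul_le_mul_of_nonneg_right hAlo
                positivity
              apply mul_le_mul_of_nonneg_right this (by positivity)
          _ = α j * β ^ (k + 1) := by ring
      calc ((2 * (K:ℝ) + 3) * β ^ k * ((k:ℝ) + 1)) + (1 - α j) * S'
            + (1 - α j) * ((k:ℝ) + 1)
          ≤ (2 * (K:ℝ) + 3) * β ^ k * ((k:ℝ) + 1) + ((k:ℝ) + 1) + ((k:ℝ) + 1) := by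
            linarith
        _ ≤ (2 * (K:ℝ) + 3) * β ^ k * ((k:ℝ) + 1) + (2 * (K:ℝ) + 3) * β ^ k := by
            have h5 : (2 * (K:ℝ) + 3) * 1 ≤ (2 * (K:ℝ) + 3) * β ^ k :=
              mul_le_mul_of_nonneg_left hβk hΓ
            linarith
        _ = (2 * (K:ℝ) + 3) * (((k:ℝ) + 1) + 1) * β ^ k := by ring
        _ ≤ (2 * (K:ℝ) + 3) * (((k:ℝ) + 1) + 1) * (α j * β ^ (k + 1)) := by
            apply mul_le_mul_of_nonneg_left h3
            positivity
        _ = α j * ((2 * (K:ℝ) + 3) * β ^ (k + 1) * (((k:ℝ) + 1) + 1)) := by ring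
    -- combine everything
    have hε' : ε * (((2 * (K:ℝ) + 3) * β ^ k * ((k:ℝ) + 1)) + (1 - α j) * S'
          + (1 - α j) * ((k:ℝ) + 1))
        ≤ ε * (α j * ((2 * (K:ℝ) + 3) * β ^ (k + 1) * (((k:ℝ) + 1) + 1))) :=
      mul_le_mul_of_nonneg_left hCk hε
    have h4 : (1 - α j) * ‖v N - v j‖ ≤ (1 - α j) * ((c + ε) * S' + ((k:ℝ) + 1) * ε) :=
      mul_le_mul_of_nonneg_left hD (by linarith)
    have hSkval : Sk = S' - (1 - α j) := by linarith
    rw [hSkval] at ihk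
    have hmain : α j * (c * (1 + S')
          - ε * ((2 * (K:ℝ) + 3) * β ^ (k + 1) * (((k:ℝ) + 1) + 1)))
        ≤ α j * ‖v N - x j‖ := by linarith [ihk, hGrec, h4, hε']
    have hfin := le_of_mul_le_mul_left hmain hA0
    push_cast
    linarith [hfin]

/-- Suzuki's lemma: let `{α_k} ⊂ (0,1)` with
`0 < liminf α_k ≤ limsup α_k < 1`, let `{x_k}` and `{v_k}` be bounded sequences in a real
Hilbert space `H` with `x_{k+1} = α_k x_k + (1 - α_k) v_k` and
`limsup (‖v_{k+1} - v_k‖ - ‖x_{k+1} - x_k‖) ≤ 0`. Then `‖v_k - x_k‖ → 0`. -/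
theorem suzuki_lemma
    {H : Type*} [NormedAddCommGroup H] [InnerProductSpace ℝ H] [CompleteSpace H]
    (α : ℕ → ℝ) (hα : ∀ k, α k ∈ Set.Ioo (0 : ℝ) 1)
    (hliminf : 0 < Filter.liminf α atTop)
    (hlimsup : Filter.limsup α atTop < 1)
    (x v : ℕ → H)
    (hxbdd : ∃ M : ℝ, ∀ k, ‖x k‖ ≤ M)
    (hvbdd : ∃ M : ℝ, ∀ k, ‖v k‖ ≤ M)
    (hrec : ∀ k, x (k + 1) = α k • x k + (1 - α k) • v k)
    (hls : Filter.limsup (fun k => ‖v (k + 1) - v k‖ - ‖x (k + 1) - x k‖) atTop ≤ 0) :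
    Tendsto (fun k => ‖v k - x k‖) atTop (nhds 0) := by
  obtain ⟨M₁, hM₁⟩ := hxbdd
  obtain ⟨M₂, hM₂⟩ := hvbdd
  set s : ℕ → ℝ := fun k => ‖v k - x k‖ with hsdef
  set R : ℝ := M₂ + M₁ with hRdef
  have hR : ∀ i j : ℕ, ‖v i - x j‖ ≤ R := fun i j =>
    le_trans (norm_sub_le _ _) (add_le_add (hM₂ i) (hM₁ j))
  have hsbd : ∀ k, s k ≤ R := fun k => hR k k
  have hsnn : ∀ k, 0 ≤ s k := fun k => norm_nonneg _
  have hsBddAbove : IsBoundedUnder (· ≤ ·) atTop s := Filter.isBoundedUnder_of ⟨R, hsbd⟩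
  have hsBddBelow : IsBoundedUnder (· ≥ ·) atTop s := Filter.isBoundedUnder_of ⟨0, hsnn⟩
  -- it suffices to show limsup s ≤ 0
  have hkey : limsup s atTop ≤ 0 := by
    by_contra hcon
    push_neg at hcon
    set c : ℝ := limsup s atTop with hcdef
    have hc : 0 < c := hcon
    -- parameters
    set αlo : ℝ := min (liminf α atTop / 2) (1 / 2) with hαlodef
    have hαlo0 : 0 < αlo := lt_min (by linarith) (by norm_num)
    have hαlo1 : αlo ≤ 1 := le_trans (min_le_right _ _) (by norm_num)
    have hαloLt : αlo < liminf α atTop :=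
      lt_of_le_of_lt (min_le_left _ _) (by linarith)
    set a : ℝ := (1 - limsup α atTop) / 2 with hadef
    have ha0 : 0 < a := by simp only [hadef]; linarith
    have hbαLt : limsup α atTop < 1 - a := by simp only [hadef]; linarith
    -- choose K
    obtain ⟨K, hK⟩ := exists_nat_gt ((R + 1) / (c * a))
    have hKR : R + 1 < c * a * K := by
      rw [div_lt_iff₀ (by positivity)] at hK
      nlinarith
    -- choose ε
    set CK : ℝ := (2 * K + 3) * (αlo⁻¹) ^ K * (K + 1) with hCKdef
    have hCK0 : 0 < CK := by positivity
    set ε : ℝ := min 1 (1 / CK) with hεdef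
    have hε0 : 0 < ε := lt_min one_pos (by positivity)
    have hεCK : ε * CK ≤ 1 := by
      calc ε * CK ≤ (1 / CK) * CK := mul_le_mul_of_nonneg_right (min_le_right _ _) hCK0.le
        _ = 1 := by field_simp
    -- eventual facts
    have hαBddAbove : IsBoundedUnder (· ≤ ·) atTop α :=
      Filter.isBoundedUnder_of ⟨1, fun k => (hα k).2.le⟩
    have hαBddBelow : IsBoundedUnder (· ≥ ·) atTop α :=
      Filter.isBoundedUnder_of ⟨0, fun k => (hα k).1.le⟩
    have h1 : ∀ᶠ n in atTop, αlo < α n :=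
      Filter.eventually_lt_of_lt_liminf hαloLt hαBddBelow
    have h2 : ∀ᶠ n in atTop, α n < 1 - a :=
      Filter.eventually_lt_of_limsup_lt hbαLt hαBddAbove
    have h3 : ∀ᶠ n in atTop, s n < c + ε :=
      Filter.eventually_lt_of_limsup_lt (by linarith) hsBddAbove
    have hbdd4 : IsBoundedUnder (· ≤ ·) atTop
        (fun k => ‖v (k + 1) - v k‖ - ‖x (k + 1) - x k‖) := by
      refine Filter.isBoundedUnder_of ⟨2 * M₂ + 2 * M₁, fun k => ?_⟩
      have h5 := norm_sub_le (v (k + 1)) (v k)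
      have h6 : (0:ℝ) ≤ ‖x (k + 1) - x k‖ := norm_nonneg _
      have := hM₂ (k + 1); have := hM₂ k; have := hM₁ (k+1); have := hM₁ k
      have h7 : (0:ℝ) ≤ M₁ := le_trans (norm_nonneg _) (hM₁ 0)
      show ‖v (k + 1) - v k‖ - ‖x (k + 1) - x k‖ ≤ 2 * M₂ + 2 * M₁
      linarith
    have h4 : ∀ᶠ n in atTop, ‖v (n + 1) - v n‖ - ‖x (n + 1) - x n‖ < ε :=
      Filter.eventually_lt_of_limsup_lt (lt_of_le_of_lt hls hε0) hbdd4
    obtain ⟨m, hm⟩ := Filter.eventually_atTop.1 (((h1.and h2).and h3).and h4)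
    -- choose peak N
    have hfreq : ∃ᶠ n in atTop, c - ε < s n :=
      Filter.frequently_lt_of_lt_limsup (hsBddBelow.isCoboundedUnder_le) (by linarith)
    obtain ⟨N, hN1, hN2⟩ := (hfreq.and_eventually (Filter.eventually_ge_atTop (m + K))).exists
    -- apply the key lemma
    have hkey2 := suzuki_key α x v c ε αlo K m N hα hrec hαlo0 hαlo1
      (fun i hi => ((hm i hi).1.1.1).le)
      (fun i hi => ((hm i hi).1.2).le)
      (fun i hi => by linarith [(hm i hi).2])
      hε0.le hc.le (by exact hN1.le) hN2 K le_rfl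
    -- lower bound on the sum
    have hSK : (K : ℝ) * a ≤ ∑ i ∈ Finset.Ico (N - K) N, (1 - α i) := by
      have hb : ∀ i ∈ Finset.Ico (N - K) N, a ≤ 1 - α i := by
        intro i hi
        have him : m ≤ i := le_trans (by omega) (Finset.mem_Ico.1 hi).1
        have := (hm i him).1.1.2
        linarith
      calc (K : ℝ) * a = (Finset.Ico (N - K) N).card • a := by
            rw [Nat.card_Ico, show N - (N - K) = K by omega]; simp [nsmul_eq_mul]
        _ ≤ ∑ i ∈ Finset.Ico (N - K) N, (1 - α i) := Finset.card_nsmul_le_sum _ _ _ hb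
    have hfin : ‖v N - x (N - K)‖ ≤ R := hR N (N - K)
    have hcS : c * ((K:ℝ) * a) ≤ c * (∑ i ∈ Finset.Ico (N - K) N, (1 - α i)) :=
      mul_le_mul_of_nonneg_left hSK hc.le
    nlinarith
  -- conclude
  have hliminf0 : 0 ≤ liminf s atTop :=
    Filter.le_liminf_of_le hsBddAbove.isCoboundedUnder_ge
      (Filter.Eventually.of_forall hsnn)
  have hlimsup0 : limsup s atTop = 0 :=
    le_antisymm hkey (le_trans hliminf0 (Filter.liminf_le_limsup hsBddAbove hsBddBelow))
  have hliminfeq : liminf s atTop = 0 :=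
    le_antisymm (hlimsup0 ▸ Filter.liminf_le_limsup hsBddAbove hsBddBelow) hliminf0
  exact tendsto_of_liminf_eq_limsup hliminfeq hlimsup0 hsBddAbove hsBddBelow
end

section
/- Let {a_k}, {b_k}, {δ_k}, {θ_k} be sequences of nonnegative real numbers with δ_k ∈ [0, 1/2] for all k and ∑_{k=k₀}^{∞} θ_k < +∞ for some index k₀ ≥ 1. Suppose that for all k ≥ k₀: a_{k+1} + b_k ≤ (1 − δ_k) a_k + δ_k a_{k−1} + θ_k. Then: (1) {a_k} converges and ∑_{k} b_k < +∞; (2) if moreover there exists a sequence {λ_k} of positive reals with ∑_k λ_k a_k < +∞ and ∑_k λ_k = +∞, then a_k → 0. -/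
open Filter

/-- let `{a_k}, {b_k}, {δ_k}, {θ_k}` be nonnegative sequences with
`δ_k ∈ [0, 1/2]`, `∑ θ_k < +∞`, and `a_{k+1} + b_k ≤ (1 - δ_k) a_k + δ_k a_{k-1} + θ_k`
for all `k ≥ k₀ ≥ 1`. Then (1) `{a_k}` converges and `∑ b_k < +∞`; and (2) if there is a
positive sequence `{λ_k}` with `∑ λ_k a_k < +∞` and `∑ λ_k = +∞`, then `a_k → 0`. -/
theorem quasi_fejer_inertial
    (a b δ θ : ℕ → ℝ)
    (ha : ∀ k, 0 ≤ a k) (hb : ∀ k, 0 ≤ b k)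
    (hδ : ∀ k, δ k ∈ Set.Icc (0 : ℝ) (1 / 2))
    (hθ0 : ∀ k, 0 ≤ θ k)
    (hθ : Summable θ)
    (k₀ : ℕ) (hk₀ : 1 ≤ k₀)
    (hrec : ∀ k ≥ k₀, a (k + 1) + b k ≤ (1 - δ k) * a k + δ k * a (k - 1) + θ k) :
    ((∃ L : ℝ, Tendsto a atTop (nhds L)) ∧ Summable b) ∧
      (∀ lam : ℕ → ℝ, (∀ k, 0 < lam k) → Summable (fun k => lam k * a k) →
        Tendsto (fun n : ℕ => ∑ k ∈ Finset.Icc 1 n, lam k) atTop atTop →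
        Tendsto a atTop (nhds 0)) := by
  set p : ℕ → ℝ := fun k => max (a k - a (k + 1)) 0 with hp_def
  set q : ℕ → ℝ := fun k => max (a (k + 1) - a k) 0 with hq_def
  have hp0 : ∀ k, 0 ≤ p k := fun k => le_max_right _ _
  have hq0 : ∀ k, 0 ≤ q k := fun k => le_max_right _ _
  set Θ := ∑' k, θ k with hΘdef
  have hδmul : ∀ k ≥ k₀, δ k * (a (k - 1) - a k) ≤ (1/2) * p (k - 1) := by
    intro k hk
    have h1 : k - 1 + 1 = k := by omega
    have hpk : p (k - 1) = max (a (k - 1) - a k) 0 := by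
      simp only [hp_def]; rw [h1]
    rw [hpk]
    rcases le_total (a (k - 1) - a k) 0 with h | h
    · rw [max_eq_right h]
      nlinarith [(hδ k).1, mul_nonneg (hδ k).1 (neg_nonneg.2 h)]
    · rw [max_eq_left h]
      nlinarith [mul_nonneg (by linarith [(hδ k).2] : (0:ℝ) ≤ 1/2 - δ k) h]
  have hq_le : ∀ k ≥ k₀, q k ≤ (1/2) * p (k - 1) + θ k := by
    intro k hk
    have hr := hrec k hk
    have expand : (1 - δ k) * a k + δ k * a (k - 1) = a k + δ k * (a (k - 1) - a k) := by
      ring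
    have h2 := hδmul k hk
    have h3 : (0:ℝ) ≤ (1/2) * p (k - 1) + θ k := by
      have := hp0 (k - 1); have := hθ0 k; linarith
    exact max_le (by linarith [hb k]) h3
  have hb_le : ∀ k ≥ k₀, b k ≤ p k + ((1/2) * p (k - 1) + θ k) := by
    intro k hk
    have hr := hrec k hk
    have expand : (1 - δ k) * a k + δ k * a (k - 1) = a k + δ k * (a (k - 1) - a k) := by
      ring
    have h2 := hδmul k hk
    have h3 : a k - a (k + 1) ≤ p k := le_max_left _ _
    linarith
  set P : ℕ → ℝ := fun n => ∑ i ∈ Finset.range n, p (i + k₀) with hP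
  have hPmono : Monotone P := fun m n h =>
    Finset.sum_le_sum_of_subset_of_nonneg (Finset.range_subset_range.2 h) (fun i _ _ => hp0 _)
  have hθshift : ∀ n, ∑ i ∈ Finset.range n, θ (i + k₀) ≤ Θ := by
    intro n
    have hsm : Summable (fun i => θ (i + k₀)) := (summable_nat_add_iff k₀).2 hθ
    have h1 : ∑ i ∈ Finset.range n, θ (i + k₀) ≤ ∑' i, θ (i + k₀) :=
      Summable.sum_le_tsum _ (fun i _ => hθ0 _) hsm
    have h2 := Summable.sum_add_tsum_nat_add k₀ hθ
    have h3 : 0 ≤ ∑ i ∈ Finset.range k₀, θ i := Finset.sum_nonneg fun i _ => hθ0 i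
    rw [hΘdef]; linarith
  have hpshift : ∀ n, ∑ i ∈ Finset.range n, p (i + (k₀ - 1)) ≤ p (k₀ - 1) + P n := by
    intro n
    cases n with
    | zero => simp [hP, hp0]
    | succ m =>
      rw [Finset.sum_range_succ']
      have heq : ∀ i ∈ Finset.range m, p (i + 1 + (k₀ - 1)) = p (i + k₀) := by
        intro i _; congr 1; omega
      rw [Finset.sum_congr rfl heq]
      have h1 : (0 : ℕ) + (k₀ - 1) = k₀ - 1 := by omega
      rw [h1]
      have h2 : P m ≤ P (m + 1) := hPmono (Nat.le_succ m)
      simp only [hP] at h2 ⊢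
      linarith
  have htel : ∀ n, P n = (∑ i ∈ Finset.range n, q (i + k₀)) + a k₀ - a (n + k₀) := by
    intro n
    have key : ∀ i, p (i + k₀) - q (i + k₀) = a (i + k₀) - a (i + 1 + k₀) := by
      intro i
      simp only [hp_def, hq_def]
      have e : i + k₀ + 1 = i + 1 + k₀ := by omega
      rw [e]
      rcases le_total (a (i + k₀)) (a (i + 1 + k₀)) with h | h
      · rw [max_eq_right (by linarith), max_eq_left (by linarith)]; ring
      · rw [max_eq_left (by linarith), max_eq_right (by linarith)]; ring
    have h1 : ∑ i ∈ Finset.range n, (p (i + k₀) - q (i + k₀)) = a (0 + k₀) - a (n + k₀) := by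
      calc ∑ i ∈ Finset.range n, (p (i + k₀) - q (i + k₀))
          = ∑ i ∈ Finset.range n, ((fun j => a (j + k₀)) i - (fun j => a (j + k₀)) (i + 1)) := by
            refine Finset.sum_congr rfl fun i _ => ?_
            simpa using key i
        _ = a (0 + k₀) - a (n + k₀) := Finset.sum_range_sub' _ n
    rw [Finset.sum_sub_distrib] at h1
    simp only [Nat.zero_add] at h1
    simp only [hP]
    linarith
  have hPbound : ∀ n, P n ≤ p (k₀ - 1) + 2 * Θ + 2 * a k₀ := by
    intro n
    have h1 := htel n
    have h2 : ∑ i ∈ Finset.range n, q (i + k₀)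
        ≤ ∑ i ∈ Finset.range n, ((1/2) * p (i + (k₀ - 1)) + θ (i + k₀)) := by
      refine Finset.sum_le_sum fun i _ => ?_
      have h := hq_le (i + k₀) (Nat.le_add_left _ _)
      have e : i + k₀ - 1 = i + (k₀ - 1) := by omega
      rwa [e] at h
    rw [Finset.sum_add_distrib, ← Finset.mul_sum] at h2
    have h3 := hpshift n
    have h4 := hθshift n
    have h5 := ha (n + k₀)
    linarith
  have hpsum' : Summable (fun i => p (i + k₀)) :=
    summable_of_sum_range_le (fun n => hp0 _) hPbound
  have hpsum : Summable p := (summable_nat_add_iff k₀).1 hpsum'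
  have hqmaj : Summable (fun i => (1/2) * p (i + (k₀ - 1)) + θ (i + k₀)) :=
    (((summable_nat_add_iff (k₀ - 1)).2 hpsum).mul_left _).add ((summable_nat_add_iff k₀).2 hθ)
  have hqsum' : Summable (fun i => q (i + k₀)) := by
    refine Summable.of_nonneg_of_le (fun i => hq0 _) (fun i => ?_) hqmaj
    have h := hq_le (i + k₀) (Nat.le_add_left _ _)
    have e : i + k₀ - 1 = i + (k₀ - 1) := by omega
    rwa [e] at h
  have hqsum : Summable q := (summable_nat_add_iff k₀).1 hqsum'
  have hdist : Summable (fun n => dist (a n) (a (n + 1))) := by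
    refine Summable.of_nonneg_of_le (fun n => dist_nonneg) (fun n => ?_) (hpsum.add hqsum)
    rw [Real.dist_eq]
    rcases le_total (a n) (a (n + 1)) with h | h
    · rw [abs_of_nonpos (by linarith)]
      have h1 : a (n + 1) - a n ≤ q n := le_max_left _ _
      have := hp0 n; linarith
    · rw [abs_of_nonneg (by linarith)]
      have h1 : a n - a (n + 1) ≤ p n := le_max_left _ _
      have := hq0 n; linarith
  obtain ⟨L, hL⟩ := cauchySeq_tendsto_of_complete (cauchySeq_of_summable_dist hdist)
  have hbsum' : Summable (fun i => b (i + k₀)) := by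
    refine Summable.of_nonneg_of_le (fun i => hb _) (fun i => ?_) (hpsum'.add hqmaj)
    have h := hb_le (i + k₀) (Nat.le_add_left _ _)
    have e : i + k₀ - 1 = i + (k₀ - 1) := by omega
    rwa [e] at h
  have hbsum : Summable b := (summable_nat_add_iff k₀).1 hbsum'
  refine ⟨⟨⟨L, hL⟩, hbsum⟩, ?_⟩
  intro lam hlam hlamasum hdiv
  have hL0 : 0 ≤ L := ge_of_tendsto' hL ha
  rcases eq_or_lt_of_le hL0 with h | h
  · rwa [← h] at hL
  · exfalso
    have hev : ∀ᶠ k in atTop, L / 2 < a k :=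
      hL.eventually (eventually_gt_nhds (by linarith))
    obtain ⟨N, hN⟩ := eventually_atTop.1 hev
    have hmaj : Summable (fun i => (2 / L) * (lam (i + N) * a (i + N))) :=
      ((summable_nat_add_iff N).2 hlamasum).mul_left _
    have hlamsum' : Summable (fun i => lam (i + N)) := by
      refine Summable.of_nonneg_of_le (fun i => (hlam _).le) (fun i => ?_) hmaj
      have h1 := hN (i + N) (Nat.le_add_left _ _)
      have h2 := (hlam (i + N)).le
      rw [div_mul_eq_mul_div, le_div_iff₀ h]
      nlinarith
    have hlamsum : Summable lam := (summable_nat_add_iff N).1 hlamsum'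
    have hub : ∀ n, ∑ k ∈ Finset.Icc 1 n, lam k ≤ ∑' k, lam k :=
      fun n => Summable.sum_le_tsum _ (fun i _ => (hlam i).le) hlamsum
    obtain ⟨n, hn⟩ := (hdiv.eventually_gt_atTop (∑' k, lam k)).exists
    exact absurd (hub n) (not_le.2 hn)
end

section
/- Let {a_k}, {b_k}, {δ_k}, {θ_k}, {t_k} be sequences of nonnegative real numbers and {s_k} a sequence of real numbers satisfying: δ_k ∈ [0, 1/2] and t_k + δ_k ≤ 1 for all k, limsup_{k→∞} s_k ≤ 0, ∑_k θ_k < +∞, and ∑_k t_k = +∞. Suppose that for all k ≥ k₀ (some index k₀ ≥ 1): a_{k+1} + b_k ≤ (1 − t_k − δ_k) a_k + δ_k a_{k−1} + t_k s_k + θ_k. Then a_k → 0 as k → ∞. -/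
open Filter

set_option maxHeartbeats 1000000

/-- let `{a_k}, {b_k}, {δ_k}, {θ_k}, {t_k}` be nonnegative sequences and
`{s_k}` a real sequence with `δ_k ∈ [0, 1/2]`, `t_k + δ_k ≤ 1`, `limsup s_k ≤ 0`
(in the extended reals), `∑ θ_k < +∞`, `∑ t_k = +∞`, and
`a_{k+1} + b_k ≤ (1 - t_k - δ_k) a_k + δ_k a_{k-1} + t_k s_k + θ_k` for all `k ≥ k₀ ≥ 1`.
Then `a_k → 0`. -/
theorem quasi_fejer_inertial_strong
    (a b δ θ t s : ℕ → ℝ)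
    (ha : ∀ k, 0 ≤ a k) (hb : ∀ k, 0 ≤ b k)
    (hδ : ∀ k, δ k ∈ Set.Icc (0 : ℝ) (1 / 2))
    (hθ0 : ∀ k, 0 ≤ θ k) (ht0 : ∀ k, 0 ≤ t k)
    (htδ : ∀ k, t k + δ k ≤ 1)
    (hs : Filter.limsup (fun k : ℕ => ((s k : ℝ) : EReal)) atTop ≤ 0)
    (hθ : Summable θ)
    (ht : Tendsto (fun n : ℕ => ∑ k ∈ Finset.Icc 1 n, t k) atTop atTop)
    (k₀ : ℕ) (hk₀ : 1 ≤ k₀)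
    (hrec : ∀ k ≥ k₀,
      a (k + 1) + b k ≤ (1 - t k - δ k) * a k + δ k * a (k - 1) + t k * s k + θ k) :
    Tendsto a atTop (nhds 0) := by
  have ht1 : ∀ k, t k ≤ 1 := fun k => by have h1 := htδ k; have h2 := (hδ k).1; linarith
  rw [Metric.tendsto_atTop]
  intro ε hε
  have hε4 : 0 < ε / 4 := by linarith
  -- s is eventually < ε/4
  have hsev : ∀ᶠ k in atTop, s k < ε / 4 := by
    have h0 : (0 : EReal) < ((ε / 4 : ℝ) : EReal) := by exact_mod_cast hε4
    have h2 := Filter.eventually_lt_of_limsup_lt (lt_of_le_of_lt hs h0)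
    filter_upwards [h2] with k hk
    exact_mod_cast hk
  obtain ⟨K₁, hK₁⟩ := eventually_atTop.1 hsev
  -- θ tails are eventually small
  have hθtail : Tendsto (fun i => ∑' k, θ (k + i)) atTop (nhds 0) :=
    tendsto_sum_nat_add θ
  obtain ⟨K₂, hK₂⟩ := eventually_atTop.1 (hθtail.eventually (gt_mem_nhds hε4))
  set K := max (max k₀ K₁) K₂ with hK
  have hKk₀ : k₀ ≤ K := le_trans (le_max_left _ _) (le_max_left _ _)
  have hKK₁ : K₁ ≤ K := le_trans (le_max_right _ _) (le_max_left _ _)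
  have hKK₂ : K₂ ≤ K := le_max_right _ _
  set Q : ℕ → ℝ := fun k => max (a k - ε / 4) 0 with hQdef
  set Ψ : ℕ → ℝ := fun k => max (Q k) ((Q k + 3 * Q (k - 1)) / 4) with hΨdef
  have hQ0 : ∀ k, 0 ≤ Q k := fun k => le_max_right _ _
  have haQ : ∀ k, a k ≤ Q k + ε / 4 := by
    intro k
    have h := le_max_left (a k - ε / 4) (0 : ℝ)
    have : a k - ε / 4 ≤ Q k := h
    linarith
  have hQΨ : ∀ k, Q k ≤ Ψ k := fun k => le_max_left _ _
  have hΨ0 : ∀ k, 0 ≤ Ψ k := fun k => le_trans (hQ0 k) (hQΨ k)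
  -- recursion for Q
  have hQrec : ∀ k, K ≤ k → Q (k + 1) ≤ (1 - t k - δ k) * Q k + δ k * Q (k - 1) + θ k := by
    intro k hk
    have hr := hrec k (le_trans hKk₀ hk)
    have hsk : s k ≤ ε / 4 := le_of_lt (hK₁ k (le_trans hKK₁ hk))
    have h1 : 0 ≤ 1 - t k - δ k := by have := htδ k; linarith
    have hδ0 := (hδ k).1
    have e1 : (1 - t k - δ k) * a k ≤ (1 - t k - δ k) * (Q k + ε / 4) :=
      mul_le_mul_of_nonneg_left (haQ k) h1
    have e2 : δ k * a (k - 1) ≤ δ k * (Q (k - 1) + ε / 4) :=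
      mul_le_mul_of_nonneg_left (haQ (k - 1)) hδ0
    have e3 : t k * s k ≤ t k * (ε / 4) := mul_le_mul_of_nonneg_left hsk (ht0 k)
    have hQ1 : a (k + 1) - ε / 4 ≤ (1 - t k - δ k) * Q k + δ k * Q (k - 1) + θ k := by
      nlinarith [hb k]
    have hQ2 : (0 : ℝ) ≤ (1 - t k - δ k) * Q k + δ k * Q (k - 1) + θ k := by
      have p1 := mul_nonneg h1 (hQ0 k)
      have p2 := mul_nonneg hδ0 (hQ0 (k - 1))
      have p3 := hθ0 k
      linarith
    exact max_le hQ1 hQ2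
  -- one-step contraction for Ψ
  have hΨrec : ∀ k, K ≤ k → Ψ (k + 1) ≤ (1 - t k / 4) * Ψ k + θ k := by
    intro k hk
    have hq := hQrec k hk
    have hδ0 := (hδ k).1
    have hδh := (hδ k).2
    have htk0 := ht0 k
    have htk1 := ht1 k
    have htδk := htδ k
    have hu : Q k ≤ Ψ k := hQΨ k
    have hp : (Q k + 3 * Q (k - 1)) / 4 ≤ Ψ k := le_max_right _ _
    have hΨk0 := hΨ0 k
    have hQk0 := hQ0 k
    have hQk10 := hQ0 (k - 1)
    have hθk := hθ0 k
    have hA : Q (k + 1) ≤ (1 - t k / 4) * Ψ k + θ k := by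
      rcases le_or_gt 0 (1 - t k - 4 * δ k / 3) with hB | hB
      · nlinarith [mul_nonneg hB (sub_nonneg.2 hu),
          mul_nonneg hδ0 (sub_nonneg.2 hp), mul_nonneg htk0 hΨk0]
      · nlinarith [mul_nonpos_of_nonpos_of_nonneg (by linarith : 1 - t k - 4 * δ k / 3 ≤ 0) hQk0,
          mul_nonneg hδ0 (sub_nonneg.2 hp),
          mul_nonneg (by linarith : (0:ℝ) ≤ 1 - t k / 4 - 4 * δ k / 3) hΨk0]
    have hB2 : (Q (k + 1) + 3 * Q k) / 4 ≤ (1 - t k / 4) * Ψ k + θ k := by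
      nlinarith [mul_nonneg (by linarith : (0:ℝ) ≤ (1 - t k - δ k) / 4 + 3 / 4 - δ k / 12)
          (sub_nonneg.2 hu),
        mul_nonneg hδ0 (sub_nonneg.2 hp)]
    have hΨsucc : Ψ (k + 1) = max (Q (k + 1)) ((Q (k + 1) + 3 * Q k) / 4) := by
      simp only [hΨdef, Nat.add_sub_cancel]
    rw [hΨsucc]
    exact max_le hA hB2
  -- unrolled bound
  have hmain : ∀ n, K ≤ n →
      Ψ n ≤ (∏ j ∈ Finset.Ico K n, (1 - t j / 4)) * Ψ K + ∑ j ∈ Finset.Ico K n, θ j := by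
    intro n hn
    induction n, hn using Nat.le_induction with
    | base => simp
    | succ n hn ih =>
      rw [Finset.prod_Ico_succ_top hn, Finset.sum_Ico_succ_top hn]
      set P := ∏ j ∈ Finset.Ico K n, (1 - t j / 4) with hP
      set S := ∑ j ∈ Finset.Ico K n, θ j with hS
      have hfac0 : (0:ℝ) ≤ 1 - t n / 4 := by have := ht1 n; linarith
      have hsum0 : (0:ℝ) ≤ S := Finset.sum_nonneg fun j _ => hθ0 j
      have h1 := hΨrec n hn
      have h2 : (1 - t n / 4) * Ψ n ≤ (1 - t n / 4) * (P * Ψ K + S) :=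
        mul_le_mul_of_nonneg_left ih hfac0
      have hprod0 : (0:ℝ) ≤ P :=
        Finset.prod_nonneg fun j _ => by have := ht1 j; linarith
      have hΨK0 := hΨ0 K
      nlinarith [mul_nonneg hprod0 hΨK0, mul_nonneg (ht0 n) hsum0,
        mul_nonneg (mul_nonneg (ht0 n) hprod0) hΨK0]
  -- divergence of the t-sums over Ico K n
  have htdiv : Tendsto (fun n => ∑ j ∈ Finset.Ico K n, t j) atTop atTop := by
    have hsub : ∀ n : ℕ, ∑ j ∈ Finset.Icc 1 n, t j ≤
        (∑ j ∈ Finset.Icc 1 K, t j) + ∑ j ∈ Finset.Ico K (n + 1), t j := by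
      intro n
      have hss : Finset.Icc 1 n ⊆ Finset.Icc 1 K ∪ Finset.Ico K (n + 1) := by
        intro j hj
        simp only [Finset.mem_Icc, Finset.mem_union, Finset.mem_Ico] at *
        rcases le_or_gt j K with h | h
        · exact Or.inl ⟨hj.1, h⟩
        · exact Or.inr ⟨le_of_lt h, Nat.lt_succ_of_le hj.2⟩
      have h1 : ∑ j ∈ Finset.Icc 1 n, t j ≤
          ∑ j ∈ (Finset.Icc 1 K ∪ Finset.Ico K (n + 1)), t j :=
        Finset.sum_le_sum_of_subset_of_nonneg hss (fun j _ _ => ht0 j)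
      have h2 : ∑ j ∈ (Finset.Icc 1 K ∪ Finset.Ico K (n + 1)), t j +
          ∑ j ∈ (Finset.Icc 1 K ∩ Finset.Ico K (n + 1)), t j =
          (∑ j ∈ Finset.Icc 1 K, t j) + ∑ j ∈ Finset.Ico K (n + 1), t j :=
        Finset.sum_union_inter
      have h3 : (0:ℝ) ≤ ∑ j ∈ (Finset.Icc 1 K ∩ Finset.Ico K (n + 1)), t j :=
        Finset.sum_nonneg fun j _ => ht0 j
      linarith
    have hshift : Tendsto (fun n : ℕ => ∑ j ∈ Finset.Ico K (n + 1), t j) atTop atTop := by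
      have hconst : Tendsto
          (fun n : ℕ => (∑ k ∈ Finset.Icc 1 n, t k) + -(∑ j ∈ Finset.Icc 1 K, t j))
          atTop atTop := tendsto_atTop_add_const_right atTop _ ht
      apply tendsto_atTop_mono _ hconst
      intro n
      have := hsub n
      linarith
    exact (tendsto_add_atTop_iff_nat 1).1 hshift
  -- the product tends to 0
  have hprodto : Tendsto (fun n => (∏ j ∈ Finset.Ico K n, (1 - t j / 4)) * Ψ K)
      atTop (nhds 0) := by
    have hexp : ∀ n, ∏ j ∈ Finset.Ico K n, (1 - t j / 4) ≤
        Real.exp (-(∑ j ∈ Finset.Ico K n, t j) / 4) := by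
      intro n
      calc ∏ j ∈ Finset.Ico K n, (1 - t j / 4)
          ≤ ∏ j ∈ Finset.Ico K n, Real.exp (-(t j / 4)) := by
            apply Finset.prod_le_prod
            · intro j _; have := ht1 j; linarith
            · intro j _; linarith [Real.add_one_le_exp (-(t j / 4))]
        _ = Real.exp (∑ j ∈ Finset.Ico K n, -(t j / 4)) := (Real.exp_sum _ _).symm
        _ = Real.exp (-(∑ j ∈ Finset.Ico K n, t j) / 4) := by
            congr 1
            rw [Finset.sum_neg_distrib, ← Finset.sum_div, neg_div]
    have hdiv4 : Tendsto (fun n => -(∑ j ∈ Finset.Ico K n, t j) / 4) atTop atBot := by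
      have h1 : Tendsto (fun n => (∑ j ∈ Finset.Ico K n, t j) / 4) atTop atTop :=
        htdiv.atTop_div_const (by norm_num)
      have h2 := tendsto_neg_atBot_iff.2 h1
      have heq : (fun n => -(∑ j ∈ Finset.Ico K n, t j) / 4)
          = fun n => -((∑ j ∈ Finset.Ico K n, t j) / 4) := by
        funext n; ring
      rw [heq]
      exact h2
    have hexp0 : Tendsto (fun n => Real.exp (-(∑ j ∈ Finset.Ico K n, t j) / 4))
        atTop (nhds 0) := Real.tendsto_exp_atBot.comp hdiv4
    have hprod0' : Tendsto (fun n => ∏ j ∈ Finset.Ico K n, (1 - t j / 4)) atTop (nhds 0) := by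
      apply tendsto_of_tendsto_of_tendsto_of_le_of_le tendsto_const_nhds hexp0
      · intro n
        exact Finset.prod_nonneg fun j _ => by have := ht1 j; linarith
      · exact hexp
    simpa using hprod0'.mul_const (Ψ K)
  obtain ⟨N, hN⟩ := eventually_atTop.1 (hprodto.eventually (gt_mem_nhds hε4))
  refine ⟨max N K, fun n hn => ?_⟩
  have hnN : N ≤ n := le_trans (le_max_left _ _) hn
  have hnK : K ≤ n := le_trans (le_max_right _ _) hn
  have h1 := hmain n hnK
  have h2 : ∑ j ∈ Finset.Ico K n, θ j ≤ ε / 4 := by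
    have hsum : ∑ j ∈ Finset.Ico K n, θ j = ∑ i ∈ Finset.range (n - K), θ (K + i) :=
      Finset.sum_Ico_eq_sum_range θ K n
    have hsummable : Summable (fun i => θ (i + K)) := (summable_nat_add_iff K).2 hθ
    have hle : ∑ i ∈ Finset.range (n - K), θ (K + i) ≤ ∑' i, θ (i + K) := by
      have := Summable.sum_le_tsum (Finset.range (n - K))
        (fun i _ => hθ0 (i + K)) hsummable
      simpa [add_comm] using this
    have htail := hK₂ K hKK₂
    rw [hsum]
    linarith
  have h3 := hN n hnN
  have hQn : Q n ≤ Ψ n := hQΨ n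
  have han : a n ≤ Q n + ε / 4 := haQ n
  have : dist (a n) 0 = a n := by
    rw [Real.dist_eq, sub_zero, abs_of_nonneg (ha n)]
  rw [this]
  linarith
end

section
/- (Passty's ergodic lemma) Let H be a real Hilbert space, {x_k} a sequence in H, and B ⊆ H a nonempty set. Let {r_k} be a sequence of positive reals with ∑_{k=1}^{∞} r_k = +∞, and define the ergodic averages x̃_n = (1/σ_n) ∑_{k=1}^{n} r_k x_k, where σ_n = ∑_{k=1}^{n} r_k. Suppose that: (1) for every y ∈ B, the sequence {‖x_k − y‖} converges; (2) every weak cluster point of {x̃_n} belongs to B. Then {x̃_n} converges weakly to some point x̄ ∈ B. -/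
/-!
Since `‖x_k - y‖` converges for every `y ∈ B`, the sequence `x` is bounded, and expanding
`‖x_k - y₁‖² - ‖x_k - y₂‖²` shows that `⟪x_k, y₁ - y₂⟫` converges for all `y₁, y₂ ∈ B`. Weighted
Cesàro averaging preserves both facts, so `x̃` is bounded and `⟪x̃_n, y₁ - y₂⟫` converges. If
`z₁, z₂ ∈ B` are weak cluster points of `x̃`, the limit of `⟪x̃_n, z₁ - z₂⟫` is then both
`⟪z₁, z₁ - z₂⟫` and `⟪z₂, z₁ - z₂⟫`, whence `‖z₁ - z₂‖² = 0`. A bounded sequence in a Hilbert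
space has a weakly convergent subsequence, so `x̃` has exactly one weak cluster point, and
therefore converges weakly to it.
-/

open Filter RealInnerProductSpace

/-- Weak convergence of a sequence in a real inner product space, characterized by
convergence of inner products against every vector. -/
def WeaklyConvergesTo {H : Type*} [NormedAddCommGroup H] [InnerProductSpace ℝ H]
    (x : ℕ → H) (l : H) : Prop :=
  ∀ q : H, Tendsto (fun k => ⟪x k, q⟫) atTop (nhds ⟪l, q⟫)

open Topology Finset Bornology

section CenterMass

variable {E : Type*} [NormedAddCommGroup E] [NormedSpace ℝ E]

theorem Finset.sum_Icc_one_eq_sum_range {M : Type*} [AddCommMonoid M] (f : ℕ → M) (n : ℕ) :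
    ∑ k ∈ Icc 1 n, f k = ∑ i ∈ range n, f (i + 1) := by
  rw [← Ico_add_one_right_eq_Icc, sum_Ico_eq_sum_range]
  simp only [add_tsub_cancel_right, add_comm]

theorem Finset.centerMass_Icc_one_eq_range (w : ℕ → ℝ) (z : ℕ → E) (n : ℕ) :
    (Icc 1 n).centerMass w z = (range n).centerMass (fun i => w (i + 1)) (fun i => z (i + 1)) := by
  simp only [centerMass, sum_Icc_one_eq_sum_range]

theorem Finset.centerMass_sub_const {ι : Type*} {t : Finset ι} {w : ι → ℝ}
    (hw : ∑ i ∈ t, w i ≠ 0) (z : ι → E) (c : E) :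
    t.centerMass w z - c = (∑ i ∈ t, w i)⁻¹ • ∑ i ∈ t, w i • (z i - c) := by
  simp only [centerMass, smul_sub, sum_sub_distrib, ← sum_smul, smul_smul, inv_mul_cancel₀ hw,
    one_smul]

theorem Filter.Tendsto.centerMass_range {w : ℕ → ℝ} {a : ℕ → E} {c : E}
    (ha : Tendsto a atTop (𝓝 c)) (hw : ∀ k, 0 ≤ w k)
    (hσ : Tendsto (fun n => ∑ i ∈ range n, w i) atTop atTop) :
    Tendsto (fun n => (range n).centerMass w a) atTop (𝓝 c) := by
  have hsmall : (fun i => w i • (a i - c)) =o[atTop] w := by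
    simpa using (Asymptotics.isBigO_refl w atTop).smul_isLittleO
      ((Asymptotics.isLittleO_one_iff ℝ).2 (tendsto_sub_nhds_zero_iff.2 ha))
  rw [← tendsto_sub_nhds_zero_iff]
  refine ((hsmall.sum_range hw hσ).tendsto_inv_smul_nhds_zero).congr' ?_
  filter_upwards [hσ.eventually_gt_atTop 0] with n hn
  exact (centerMass_sub_const hn.ne' a c).symm

theorem Filter.Tendsto.centerMass_Icc_one {w : ℕ → ℝ} {a : ℕ → E} {c : E}
    (ha : Tendsto a atTop (𝓝 c)) (hw : ∀ k, 0 ≤ w k)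
    (hσ : Tendsto (fun n => ∑ k ∈ Icc 1 n, w k) atTop atTop) :
    Tendsto (fun n => (Icc 1 n).centerMass w a) atTop (𝓝 c) := by
  simp only [centerMass_Icc_one_eq_range]
  simp only [sum_Icc_one_eq_sum_range] at hσ
  exact ((tendsto_add_atTop_iff_nat 1).2 ha).centerMass_range (fun k => hw _) hσ

theorem isBounded_range_centerMass {α ι : Type*} (s : α → Finset ι) {w : ι → ℝ}
    (hw : ∀ i, 0 ≤ w i) {z : ι → E} (hz : IsBounded (Set.range z)) :
    IsBounded (Set.range fun a => (s a).centerMass w z) := by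
  refine (isBounded_convexHull.2 (hz.insert 0)).subset ?_
  rintro _ ⟨a, rfl⟩
  rcases (sum_nonneg fun i _ => hw i : 0 ≤ ∑ i ∈ s a, w i).eq_or_lt with hσ | hσ
  · simp only [centerMass, ← hσ, inv_zero, zero_smul]
    exact subset_convexHull ℝ _ (Set.mem_insert 0 _)
  · exact (s a).centerMass_mem_convexHull (fun i _ => hw i) hσ
      fun i _ => Set.mem_insert_of_mem 0 (Set.mem_range_self i)

end CenterMass

section WeakConvergence

variable {H : Type*} [NormedAddCommGroup H] [InnerProductSpace ℝ H]

theorem Finset.inner_centerMass_left {ι : Type*} (t : Finset ι) (w : ι → ℝ) (z : ι → H) (v : H) :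
    ⟪t.centerMass w z, v⟫ = t.centerMass w fun i => ⟪z i, v⟫ := by
  simp only [centerMass, real_inner_smul_left, sum_inner, smul_eq_mul]

theorem weaklyConvergesTo_of_forall_mem_submodule (K : Submodule ℝ H) [K.HasOrthogonalProjection]
    {a : ℕ → H} {z : H} (ha : ∀ n, a n ∈ K) (hz : z ∈ K)
    (h : ∀ v ∈ K, Tendsto (fun n => ⟪a n, v⟫) atTop (𝓝 ⟪z, v⟫)) : WeaklyConvergesTo a z := by
  intro q
  obtain ⟨v, hv, u, hu, rfl⟩ := K.exists_add_mem_mem_orthogonal q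
  simpa only [inner_add_right, Submodule.inner_right_of_mem_orthogonal (ha _) hu,
    Submodule.inner_right_of_mem_orthogonal hz hu, add_zero] using h v hv

theorem exists_strictMono_weaklyConvergesTo [CompleteSpace H] {a : ℕ → H}
    (ha : IsBounded (Set.range a)) : ∃ z φ, StrictMono φ ∧ WeaklyConvergesTo (a ∘ φ) z := by
  obtain ⟨M, hM⟩ := isBounded_iff_forall_norm_le.1 ha
  -- sequential Banach–Alaoglu in the dual of the separable closed span `K` of the `a n`,
  -- followed by the Riesz representation of the limit functional
  set K := (Submodule.span ℝ (Set.range a)).topologicalClosure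
  have haK : ∀ n, a n ∈ K := fun n =>
    Submodule.le_topologicalClosure _ (Submodule.subset_span (Set.mem_range_self n))
  have : CompleteSpace K := (Submodule.isClosed_topologicalClosure _).completeSpace_coe
  have : TopologicalSpace.SeparableSpace K := by
    refine TopologicalSpace.IsSeparable.separableSpace ?_
    rw [Submodule.topologicalClosure_coe]
    exact ((Set.countable_range a).isSeparable.span).closure
  let f : ℕ → WeakDual ℝ K := fun n => StrongDual.toWeakDual ((innerSL ℝ (a n)).comp K.subtypeL)
  have hf : ∀ n, f n ∈ WeakDual.toStrongDual ⁻¹' Metric.closedBall 0 M := by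
    intro n
    refine (mem_closedBall_zero_iff (a := WeakDual.toStrongDual (f n))).2 ?_
    calc ‖(innerSL ℝ (a n)).comp K.subtypeL‖ ≤ ‖innerSL ℝ (a n)‖ * ‖K.subtypeL‖ :=
          ContinuousLinearMap.opNorm_comp_le _ _
      _ ≤ ‖innerSL ℝ (a n)‖ := mul_le_of_le_one_right (norm_nonneg _) K.norm_subtypeL_le
      _ ≤ M := (innerSL_apply_norm ℝ (a n)).trans_le (hM _ (Set.mem_range_self n))
  obtain ⟨g, -, φ, hφ, hg⟩ := WeakDual.isSeqCompact_closedBall ℝ K 0 M hf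
  refine ⟨(InnerProductSpace.toDual ℝ K).symm (WeakDual.toStrongDual g), φ, hφ,
    weaklyConvergesTo_of_forall_mem_submodule K (fun n => haK _) (Subtype.prop _) fun v hv => ?_⟩
  have hlim : ⟪((InnerProductSpace.toDual ℝ K).symm (WeakDual.toStrongDual g) : H), v⟫
      = g ⟨v, hv⟩ :=
    (K.coe_inner _ ⟨v, hv⟩).symm.trans InnerProductSpace.toDual_symm_apply
  rw [hlim]
  exact (WeakDual.eval_continuous (⟨v, hv⟩ : K)).continuousAt.tendsto.comp hg

theorem weaklyConvergesTo_of_forall_subseq [CompleteSpace H] {a : ℕ → H} {z : H}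
    (ha : IsBounded (Set.range a))
    (h : ∀ φ z', StrictMono φ → WeaklyConvergesTo (a ∘ φ) z' → z' = z) :
    WeaklyConvergesTo a z := by
  intro q
  refine tendsto_of_subseq_tendsto fun ns hns => ?_
  obtain ⟨ψ, -, hψ⟩ := strictMono_subseq_of_tendsto_atTop hns
  obtain ⟨z', φ, hφ, hz'⟩ :=
    exists_strictMono_weaklyConvergesTo (ha.subset (Set.range_comp_subset_range (ns ∘ ψ) a))
  obtain rfl := h _ z' (hψ.comp hφ) hz'
  exact ⟨ψ ∘ φ, hz' q⟩

theorem eq_of_weaklyConvergesTo_of_tendsto_inner_sub {a : ℕ → H} {φ ψ : ℕ → ℕ} {z₁ z₂ : H}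
    {c : ℝ} (hφ : Tendsto φ atTop atTop) (hψ : Tendsto ψ atTop atTop)
    (h₁ : WeaklyConvergesTo (a ∘ φ) z₁) (h₂ : WeaklyConvergesTo (a ∘ ψ) z₂)
    (hc : Tendsto (fun n => ⟪a n, z₁ - z₂⟫) atTop (𝓝 c)) : z₁ = z₂ := by
  have e₁ : ⟪z₁, z₁ - z₂⟫ = c := tendsto_nhds_unique (h₁ _) (hc.comp hφ)
  have e₂ : ⟪z₂, z₁ - z₂⟫ = c := tendsto_nhds_unique (h₂ _) (hc.comp hψ)
  rw [← sub_eq_zero, ← inner_self_eq_zero (𝕜 := ℝ), inner_sub_left, e₁, e₂, sub_self]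

theorem tendsto_inner_sub_of_tendsto_norm_sub {x : ℕ → H} {y₁ y₂ : H} {L₁ L₂ : ℝ}
    (h₁ : Tendsto (fun k => ‖x k - y₁‖) atTop (𝓝 L₁))
    (h₂ : Tendsto (fun k => ‖x k - y₂‖) atTop (𝓝 L₂)) :
    Tendsto (fun k => ⟪x k, y₁ - y₂⟫) atTop
      (𝓝 ((‖y₁‖ ^ 2 - ‖y₂‖ ^ 2 - (L₁ ^ 2 - L₂ ^ 2)) / 2)) := by
  have key : ∀ k, ⟪x k, y₁ - y₂⟫ =
      (‖y₁‖ ^ 2 - ‖y₂‖ ^ 2 - (‖x k - y₁‖ ^ 2 - ‖x k - y₂‖ ^ 2)) / 2 := fun k => by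
    rw [norm_sub_sq_real, norm_sub_sq_real, inner_sub_right]
    ring
  simp only [key]
  exact (tendsto_const_nhds.sub ((h₁.pow 2).sub (h₂.pow 2))).div_const 2

end WeakConvergence

/-- Passty's ergodic lemma: let `{x_k}` be a sequence in a real Hilbert
space `H`, `B ⊆ H` nonempty, `{r_k}` positive with `∑ r_k = +∞`, and let
`x̃_n = σ_n⁻¹ ∑_{k=1}^n r_k x_k` with `σ_n = ∑_{k=1}^n r_k`. If (1) for every `y ∈ B` the
sequence `{‖x_k - y‖}` converges, and (2) every weak cluster point of `{x̃_n}` belongs to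
`B`, then `{x̃_n}` converges weakly to some `x̄ ∈ B`. -/
theorem passty_ergodic_lemma
    {H : Type*} [NormedAddCommGroup H] [InnerProductSpace ℝ H] [CompleteSpace H]
    (x : ℕ → H) (B : Set H) (hBne : B.Nonempty)
    (r : ℕ → ℝ) (hr : ∀ k, 0 < r k)
    (hrdiv : Tendsto (fun n : ℕ => ∑ k ∈ Finset.Icc 1 n, r k) atTop atTop)
    (xt : ℕ → H)
    (hxt : ∀ n : ℕ, xt n = (∑ k ∈ Finset.Icc 1 n, r k)⁻¹ • ∑ k ∈ Finset.Icc 1 n, r k • x k)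
    (hdist : ∀ y ∈ B, ∃ L : ℝ, Tendsto (fun k => ‖x k - y‖) atTop (nhds L))
    (hcluster : ∀ z : H, (∃ φ : ℕ → ℕ, StrictMono φ ∧ WeaklyConvergesTo (xt ∘ φ) z) → z ∈ B) :
    ∃ xbar ∈ B, WeaklyConvergesTo xt xbar := by
  obtain rfl : xt = fun n => (Icc 1 n).centerMass r x := funext hxt
  have hx_bdd : IsBounded (Set.range x) := by
    obtain ⟨y₀, hy₀⟩ := hBne
    obtain ⟨L, hL⟩ := hdist y₀ hy₀
    obtain ⟨C, hC⟩ := hL.bddAbove_range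
    refine Metric.isBounded_closedBall (x := y₀) (r := C) |>.subset ?_
    rintro _ ⟨k, rfl⟩
    exact mem_closedBall_iff_norm.2 (hC (Set.mem_range_self k))
  have hxt_bdd := isBounded_range_centerMass (fun n => Icc 1 n) (fun k => (hr k).le) hx_bdd
  have hxt_inner : ∀ y₁ ∈ B, ∀ y₂ ∈ B, ∃ c,
      Tendsto (fun n => ⟪(Icc 1 n).centerMass r x, y₁ - y₂⟫) atTop (𝓝 c) := by
    intro y₁ hy₁ y₂ hy₂
    obtain ⟨L₁, hL₁⟩ := hdist y₁ hy₁
    obtain ⟨L₂, hL₂⟩ := hdist y₂ hy₂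
    simp only [inner_centerMass_left]
    exact ⟨_, (tendsto_inner_sub_of_tendsto_norm_sub hL₁ hL₂).centerMass_Icc_one
      (fun k => (hr k).le) hrdiv⟩
  obtain ⟨z, φ, hφ, hz⟩ := exists_strictMono_weaklyConvergesTo hxt_bdd
  have hzB := hcluster z ⟨φ, hφ, hz⟩
  refine ⟨z, hzB, weaklyConvergesTo_of_forall_subseq hxt_bdd fun ψ z' hψ hz' => ?_⟩
  obtain ⟨c, hc⟩ := hxt_inner z' (hcluster z' ⟨ψ, hψ, hz'⟩) z hzB
  exact eq_of_weaklyConvergesTo_of_tendsto_inner_sub hψ.tendsto_atTop hφ.tendsto_atTop hz' hz hc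
end

section
/- (Control inequality of Lemma 10, monotone case) Let H be a real Hilbert space, C ⊆ H nonempty closed convex, and F, G : H × H → ℝ bifunctions on C satisfying (C1)–(C4). Let r > 0, λ > 0, γ ∈ [0,1), b ∈ (γ, 1), c ∈ (0, 2), and x_{k−1}, x_k ∈ H. Set y = (1−γ) x_k + γ x_{k−1}. Let u ∈ C be a resolvent point of G at y with parameter r, and let z ∈ C be a resolvent point of F at u with parameter rλ. Let x ∈ S_F, let p ∈ H satisfy ⟨p, w − x⟩ ≤ 0 for all w ∈ S_F, let v ∈ H satisfy G(x, y') + ⟨v − p, x − y'⟩ ≥ 0 for all y' ∈ C, and let Φ ∈ ℝ satisfy F(w, x) + (2/λ)⟨p, w − x⟩ ≤ Φ for all w ∈ C. Then: ‖z − x‖² ≤ rλ F(z, x) + rλ Φ + (2/c) r² ‖p‖² + (1−γ)‖x_k − x‖² + γ‖x_{k−1} − x‖² − (1 − γ/b)‖u − x_k‖² − γ(1 − b)‖x_k − x_{k−1}‖² − (1 − c/2)‖u − z‖² + 2r⟨v, x − u⟩. -/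
open RealInnerProductSpace

/-- control inequality of Lemma 10, monotone case. -/
theorem control_inequality
    {H : Type*} [NormedAddCommGroup H] [InnerProductSpace ℝ H] [CompleteSpace H]
    (C : Set H) (hCne : C.Nonempty) (hCcl : IsClosed C) (hCcv : Convex ℝ C)
    (F G : H → H → ℝ)
    -- (C1)-(C4) for F
    (hF1 : ∀ x ∈ C, F x x = 0)
    (hF2 : ∀ x ∈ C, ConvexOn ℝ C (F x))
    (hF3 : ∀ x ∈ C, LowerSemicontinuousOn (F x) C)
    (hF4 : ∀ x ∈ C, ∀ y ∈ C, F x y + F y x ≤ 0)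
    -- (C1)-(C4) for G
    (hG1 : ∀ x ∈ C, G x x = 0)
    (hG2 : ∀ x ∈ C, ConvexOn ℝ C (G x))
    (hG3 : ∀ x ∈ C, LowerSemicontinuousOn (G x) C)
    (hG4 : ∀ x ∈ C, ∀ y ∈ C, G x y + G y x ≤ 0)
    -- parameters
    (r lam γ b c : ℝ)
    (hr : 0 < r) (hlam : 0 < lam)
    (hγ : γ ∈ Set.Ico (0 : ℝ) 1) (hb : b ∈ Set.Ioo γ 1) (hc : c ∈ Set.Ioo (0 : ℝ) 2)
    (xkm xk : H)
    -- the inertial point y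
    (y : H) (hy : y = (1 - γ) • xk + γ • xkm)
    -- u is a resolvent point of G at y with parameter r
    (u : H) (hu : u ∈ C) (hures : ∀ w ∈ C, 0 ≤ r * G u w + ⟪w - u, u - y⟫)
    -- z is a resolvent point of F at u with parameter r * lam
    (z : H) (hz : z ∈ C) (hzres : ∀ w ∈ C, 0 ≤ (r * lam) * F z w + ⟪w - z, z - u⟫)
    -- x ∈ S_F
    (x : H) (hx : x ∈ C) (hxSF : ∀ w ∈ C, 0 ≤ F x w)
    -- p ∈ N_{S_F}(x)
    (p : H) (hp : ∀ w, w ∈ C → (∀ w' ∈ C, 0 ≤ F w w') → ⟪p, w - x⟫ ≤ 0)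
    -- v - p ∈ A^G(x)
    (v : H) (hv : ∀ y' ∈ C, 0 ≤ G x y' + ⟪v - p, x - y'⟫)
    -- Φ bounds the Fitzpatrick-type quantity
    (Φ : ℝ) (hΦ : ∀ w ∈ C, F w x + (2 / lam) * ⟪p, w - x⟫ ≤ Φ) :
    ‖z - x‖ ^ 2 ≤
      r * lam * F z x + r * lam * Φ + (2 / c) * r ^ 2 * ‖p‖ ^ 2
        + (1 - γ) * ‖xk - x‖ ^ 2 + γ * ‖xkm - x‖ ^ 2
        - (1 - γ / b) * ‖u - xk‖ ^ 2 - γ * (1 - b) * ‖xk - xkm‖ ^ 2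
        - (1 - c / 2) * ‖u - z‖ ^ 2 + 2 * r * ⟪v, x - u⟫ := by

  have hγ0 : (0:ℝ) ≤ γ := hγ.1
  have hb0 : (0:ℝ) < b := lt_of_le_of_lt hγ0 hb.1
  have hc0 : (0:ℝ) < c := hc.1
  -- general expansion lemma
  have expand : ∀ (a b : ℝ) (v w : H), ‖a • v + b • w‖ ^ 2
      = a ^ 2 * ‖v‖ ^ 2 + 2 * (a * b) * ⟪v, w⟫ + b ^ 2 * ‖w‖ ^ 2 := by
    intro a b v w
    rw [norm_add_sq_real, norm_smul, norm_smul, real_inner_smul_left,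
      real_inner_smul_right, mul_pow, mul_pow, Real.norm_eq_abs, Real.norm_eq_abs,
      sq_abs, sq_abs]
    ring
  -- basic hypotheses instantiated
  have h1 : 0 ≤ (r * lam) * F z x + ⟪x - z, z - u⟫ := hzres x hx
  have h2 : F z x + (2 / lam) * ⟪p, z - x⟫ ≤ Φ := hΦ z hz
  have h3 : 0 ≤ r * G u x + ⟪x - u, u - y⟫ := hures x hx
  have h4 : 0 ≤ G x u + ⟪v - p, x - u⟫ := hv u hu
  have h5 : G x u + G u x ≤ 0 := hG4 x hx u hu
  -- P2 : multiply h2 by r*lam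
  have P2 : r * lam * F z x + 2 * r * ⟪p, z - x⟫ ≤ r * lam * Φ := by
    have h := mul_le_mul_of_nonneg_left h2 (le_of_lt (mul_pos hr hlam))
    have e : r * lam * (F z x + (2 / lam) * ⟪p, z - x⟫)
        = r * lam * F z x + 2 * r * ⟪p, z - x⟫ := by
      field_simp
    linarith [e ▸ h]
  -- P3 : from h3, h4, h5
  have hGle : G u x ≤ ⟪v - p, x - u⟫ := by linarith
  have hGler : r * G u x ≤ r * ⟪v - p, x - u⟫ :=
    mul_le_mul_of_nonneg_left hGle hr.le
  have hvp : ⟪v - p, x - u⟫ = ⟪v, x - u⟫ - ⟪p, x - u⟫ := inner_sub_left _ _ _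
  have P3 : 0 ≤ r * ⟪v, x - u⟫ - r * ⟪p, x - u⟫ + ⟪x - u, u - y⟫ := by
    rw [hvp] at hGler
    linarith
  -- splitting of ⟪p, z - x⟫
  have hsplit : ⟪p, z - x⟫ = ⟪p, z - u⟫ - ⟪p, x - u⟫ := by
    rw [show z - x = (z - u) - (x - u) from by abel, inner_sub_right]
  -- E1
  have E1 : ‖x - u‖ ^ 2 = ‖z - x‖ ^ 2 + 2 * ⟪x - z, z - u⟫ + ‖z - u‖ ^ 2 := by
    rw [show x - u = (x - z) + (z - u) from by abel, norm_add_sq_real,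
      norm_sub_rev x z]
  -- E2
  have E2 : ‖x - y‖ ^ 2 = ‖x - u‖ ^ 2 + 2 * ⟪x - u, u - y⟫ + ‖u - y‖ ^ 2 := by
    rw [show x - y = (x - u) + (u - y) from by abel, norm_add_sq_real]
  -- inner product identity for E3
  have hin : 2 * ⟪x - xk, x - xkm⟫ = ‖xk - x‖ ^ 2 + ‖xkm - x‖ ^ 2 - ‖xk - xkm‖ ^ 2 := by
    have h := norm_sub_sq_real (x - xkm) (x - xk)
    rw [show x - xkm - (x - xk) = xk - xkm from by abel,
      real_inner_comm (x - xk) (x - xkm)] at h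
    have s1 : ‖x - xk‖ ^ 2 = ‖xk - x‖ ^ 2 := by rw [norm_sub_rev]
    have s2 : ‖x - xkm‖ ^ 2 = ‖xkm - x‖ ^ 2 := by rw [norm_sub_rev]
    linarith
  -- E3
  have E3 : ‖x - y‖ ^ 2 = (1 - γ) * ‖xk - x‖ ^ 2 + γ * ‖xkm - x‖ ^ 2
      - γ * (1 - γ) * ‖xk - xkm‖ ^ 2 := by
    rw [show x - y = (1 - γ) • (x - xk) + γ • (x - xkm) from by rw [hy]; module,
      expand, norm_sub_rev x xk, norm_sub_rev x xkm]
    linear_combination ((1 - γ) * γ) * hin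
  -- E4
  have E4 : ‖u - y‖ ^ 2 = ‖u - xk‖ ^ 2 - 2 * γ * ⟪u - xk, xkm - xk⟫
      + γ ^ 2 * ‖xk - xkm‖ ^ 2 := by
    rw [show u - y = (1 : ℝ) • (u - xk) + (-γ) • (xkm - xk) from by rw [hy]; module,
      expand, norm_sub_rev xkm xk]
    ring
  -- Young 1
  have Y1 : 0 ≤ (c / 2) * ‖z - u‖ ^ 2 + 2 * r * ⟪p, z - u⟫
      + (2 / c) * r ^ 2 * ‖p‖ ^ 2 := by
    have h0 : 0 ≤ ‖c • (z - u) + (2 * r) • p‖ ^ 2 := sq_nonneg _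
    rw [expand] at h0
    rw [real_inner_comm p (z - u)] at h0
    have e : 2 * c * ((c / 2) * ‖z - u‖ ^ 2 + 2 * r * ⟪p, z - u⟫
        + (2 / c) * r ^ 2 * ‖p‖ ^ 2)
        = c ^ 2 * ‖z - u‖ ^ 2 + 2 * (c * (2 * r)) * ⟪p, z - u⟫
          + (2 * r) ^ 2 * ‖p‖ ^ 2 := by
      field_simp
    have h1' : 2 * c * 0 ≤ 2 * c * ((c / 2) * ‖z - u‖ ^ 2 + 2 * r * ⟪p, z - u⟫
        + (2 / c) * r ^ 2 * ‖p‖ ^ 2) := by rw [mul_zero, e]; exact h0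
    exact le_of_mul_le_mul_left h1' (by linarith)
  -- Young 2
  have Y2 : 0 ≤ (γ / b) * ‖u - xk‖ ^ 2 - 2 * γ * ⟪u - xk, xkm - xk⟫
      + γ * b * ‖xk - xkm‖ ^ 2 := by
    have h0 : 0 ≤ γ * ‖(1 : ℝ) • (u - xk) + (-b) • (xkm - xk)‖ ^ 2 :=
      mul_nonneg hγ0 (sq_nonneg _)
    rw [expand, norm_sub_rev xkm xk] at h0
    have e : b * ((γ / b) * ‖u - xk‖ ^ 2 - 2 * γ * ⟪u - xk, xkm - xk⟫
        + γ * b * ‖xk - xkm‖ ^ 2)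
        = γ * ((1:ℝ) ^ 2 * ‖u - xk‖ ^ 2 + 2 * (1 * -b) * ⟪u - xk, xkm - xk⟫
          + (-b) ^ 2 * ‖xk - xkm‖ ^ 2) := by
      field_simp
      ring
    have h1' : b * 0 ≤ b * ((γ / b) * ‖u - xk‖ ^ 2 - 2 * γ * ⟪u - xk, xkm - xk⟫
        + γ * b * ‖xk - xkm‖ ^ 2) := by rw [mul_zero, e]; exact h0
    exact le_of_mul_le_mul_left h1' hb0
  -- symmetry for the z-u / u-z norm
  have sB : ‖u - z‖ ^ 2 = ‖z - u‖ ^ 2 := by rw [norm_sub_rev]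
  rw [hsplit] at P2
  have S1 : ‖z - x‖ ^ 2 ≤ ‖x - u‖ ^ 2 + r * lam * F z x + r * lam * Φ
      + (2 / c) * r ^ 2 * ‖p‖ ^ 2 + 2 * r * ⟪p, x - u⟫
      - (1 - c / 2) * ‖z - u‖ ^ 2 := by linarith [h1, P2, Y1, E1]
  have S2 : ‖x - u‖ ^ 2 + 2 * r * ⟪p, x - u⟫
      ≤ ‖x - y‖ ^ 2 - ‖u - y‖ ^ 2 + 2 * r * ⟪v, x - u⟫ := by linarith [P3, E2]
  have S3 : ‖x - y‖ ^ 2 - ‖u - y‖ ^ 2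
      ≤ (1 - γ) * ‖xk - x‖ ^ 2 + γ * ‖xkm - x‖ ^ 2
        - (1 - γ / b) * ‖u - xk‖ ^ 2 - γ * (1 - b) * ‖xk - xkm‖ ^ 2 := by
    linarith [E3, E4, Y2]
  rw [show ‖u - z‖ = ‖z - u‖ from norm_sub_rev u z]
  linarith [S1, S2, S3]
end
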